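/- arXiv:1810.06291 — 2 statements merged into one kernel-verified Lean document; each statement's English description precedes it below -/
import Mathlib

section
/- Let P be strictly stochastically transitive on S_n and σ*_P(i) = 1 + Σ_{j≠i} 𝟙{p_{i,j} < 1/2}. Then σ*_P is the unique minimizer of L_P(σ) = Σ_{i<j} |p_{i,j} − 𝟙{σ(i)<σ(j)}| over S_n, and it satisfies (p_{i,j} − 1/2)(σ*_P(j) − σ*_P(i)) > 0 for all i < j. -/
open Finset
open scoped Classical

/-- Pairwise marginal `p_{i,j} = P(σ(i) < σ(j))`. -/
def pairwiseMarginal {n : ℕ} (P : Equiv.Perm (Fin n) → ℝ) (i j : Fin n) : ℝ :=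
  ∑ σ : Equiv.Perm (Fin n), if σ i < σ j then P σ else 0

/-- Copeland rank: `σ*_P(i) = 1 + #{j ≠ i : p_{i,j} < 1/2}`. -/
noncomputable def copelandRank {n : ℕ} (P : Equiv.Perm (Fin n) → ℝ)
    (i : Fin n) : ℕ :=
  1 + (Finset.univ.filter (fun j => j ≠ i ∧ pairwiseMarginal P i j < 1 / 2)).card

/-- `L_P(σ) = Σ_{i<j} |p_{i,j} - 𝟙{σ(i)<σ(j)}|`. -/
noncomputable def kemenyRisk {n : ℕ} (P : Equiv.Perm (Fin n) → ℝ)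
    (σ : Equiv.Perm (Fin n)) : ℝ :=
  ∑ p ∈ Finset.univ.filter (fun p : Fin n × Fin n => p.1 < p.2),
    |pairwiseMarginal P p.1 p.2 - if σ p.1 < σ p.2 then 1 else 0|

/-!
Under strict stochastic transitivity the majority relation `1/2 < p_{i,j}` is a strict total
order on the items, and `σ*_P(i) - 1` counts the items that beat `i` by majority, so `σ*_P` is the
ranking realising that order. Each summand `|p_{i,j} - 𝟙{σ(i) < σ(j)}|` of the Kemeny risk is
strictly smaller when `σ` orders the pair `i, j` as the majority does (`|p - 1| < |p|` iff
`1/2 < p`), and a permutation is determined by which pairs it orders increasingly, so every other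
ranking loses on some pair.
-/

section Rank
variable {α : Type*} [Fintype α] (r : α → α → Prop) [IsStrictTotalOrder α r]

theorem card_filter_rel_lt_of_rel {i j : α} (h : r i j) : #{k | r k i} < #{k | r k j} := by
  refine card_lt_card ((ssubset_iff_of_subset fun k => ?_).mpr ⟨i, ?_, ?_⟩)
  · simpa only [mem_filter, mem_univ, true_and] using fun hk => _root_.trans hk h
  · simpa using h
  · simpa using irrefl i

theorem card_filter_rel_lt_iff {i j : α} : #{k | r k i} < #{k | r k j} ↔ r i j := by
  refine ⟨fun h => ?_, card_filter_rel_lt_of_rel r⟩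
  rcases trichotomous_of r i j with hij | rfl | hji
  · exact hij
  · exact absurd h (lt_irrefl _)
  · exact absurd h (card_filter_rel_lt_of_rel r hji).not_gt

theorem exists_equiv_fin_val_eq_card_filter_rel :
    ∃ e : α ≃ Fin (Fintype.card α), ∀ i, (e i : ℕ) = #{k | r k i} := by
  have hlt i : #{k | r k i} < Fintype.card α :=
    card_lt_card (filter_ssubset.mpr ⟨i, mem_univ _, irrefl i⟩)
  let f : α → Fin (Fintype.card α) := fun i => ⟨_, hlt i⟩
  have hf : f.Injective := fun i j hij => by
    have hval : #{k | r k i} = #{k | r k j} := congrArg Fin.val hij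
    rcases trichotomous_of r i j with h | h | h
    · exact absurd hval (card_filter_rel_lt_of_rel r h).ne
    · exact h
    · exact absurd hval (card_filter_rel_lt_of_rel r h).ne'
  exact ⟨.ofBijective f ((Fintype.bijective_iff_injective_and_card f).mpr ⟨hf, by simp⟩),
    fun _ => rfl⟩

end Rank

theorem Equiv.eq_of_lt_iff_lt {α β : Type*} [LinearOrder α] [LinearOrder β] [WellFoundedLT β]
    {σ τ : α ≃ β} (h : ∀ i j, i < j → (σ i < σ j ↔ τ i < τ j)) : σ = τ := by
  have h' i j : σ i < σ j ↔ τ i < τ j := by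
    rcases lt_trichotomy i j with hij | rfl | hji
    · exact h i j hij
    · simp
    · rw [← not_iff_not, not_lt, not_lt, le_iff_lt_or_eq, le_iff_lt_or_eq, h j i hji,
        σ.injective.eq_iff, τ.injective.eq_iff]
  have hmono : StrictMono (τ.symm.trans σ) := fun a b hab => by
    simpa [h'] using hab
  have := Subsingleton.elim (hmono.orderIsoOfSurjective _ (τ.symm.trans σ).surjective)
    (OrderIso.refl β)
  ext i
  simpa using congr($this (τ i))

theorem abs_sub_one_lt_abs_iff (p : ℝ) : |p - 1| < |p| ↔ 1 / 2 < p := by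
  rw [← sq_lt_sq]; constructor <;> intro h <;> nlinarith

theorem abs_lt_abs_sub_one_iff (p : ℝ) : |p| < |p - 1| ↔ p < 1 / 2 := by
  rw [← sq_lt_sq]; constructor <;> intro h <;> nlinarith

theorem abs_sub_ite_lt_of_not_iff {p : ℝ} (hp : p ≠ 1 / 2) {b c : Prop}
    [Decidable b] [Decidable c] (hc : c ↔ 1 / 2 < p) (hbc : ¬(b ↔ c)) :
    |p - if c then 1 else 0| < |p - if b then 1 else 0| := by
  by_cases h : c
  · rw [if_pos h, if_neg (by tauto), sub_zero, abs_sub_one_lt_abs_iff]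
    exact hc.mp h
  · rw [if_neg h, if_pos (by tauto), sub_zero, abs_lt_abs_sub_one_iff]
    exact lt_of_le_of_ne (not_lt.mp (hc.not.mp h)) hp

section Copeland
variable {n : ℕ} {P : Equiv.Perm (Fin n) → ℝ}

variable (P) in
theorem pairwiseMarginal_self (i : Fin n) :
    pairwiseMarginal P i i = 0 := by
  simp [pairwiseMarginal]

theorem pairwiseMarginal_add_swap (hP1 : ∑ σ, P σ = 1) {i j : Fin n} (hij : i ≠ j) :
    pairwiseMarginal P i j + pairwiseMarginal P j i = 1 := by
  rw [pairwiseMarginal, pairwiseMarginal, ← sum_add_distrib, ← hP1]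
  refine sum_congr rfl fun σ _ => ?_
  rcases (σ.injective.ne hij).lt_or_gt with h | h
  · rw [if_pos h, if_neg h.asymm, add_zero]
  · rw [if_neg h.asymm, if_pos h, zero_add]

theorem pairwiseMarginal_lt_half_iff (hP1 : ∑ σ, P σ = 1) {i j : Fin n} (hij : i ≠ j) :
    pairwiseMarginal P i j < 1 / 2 ↔ 1 / 2 < pairwiseMarginal P j i := by
  have := pairwiseMarginal_add_swap hP1 hij
  constructor <;> intro h <;> linarith

variable (P) in
def majority (i j : Fin n) : Prop := 1 / 2 < pairwiseMarginal P i j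

theorem majority_asymm (hP1 : ∑ σ, P σ = 1) {i j : Fin n} (hij : majority P i j) :
    ¬majority P j i := by
  rcases eq_or_ne i j with rfl | hne
  · norm_num [majority, pairwiseMarginal_self] at hij
  · exact (pairwiseMarginal_lt_half_iff hP1 hne).mpr.mt (not_lt.mpr hij.le)

theorem majority_isStrictTotalOrder (hP1 : ∑ σ, P σ = 1)
    (hST : ∀ i j k : Fin n, 1 / 2 ≤ pairwiseMarginal P i j →
      1 / 2 ≤ pairwiseMarginal P j k → 1 / 2 ≤ pairwiseMarginal P i k)
    (hstrict : ∀ i j : Fin n, i ≠ j → pairwiseMarginal P i j ≠ 1 / 2) :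
    IsStrictTotalOrder (Fin n) (majority P) where
  irrefl i hii := majority_asymm hP1 hii hii
  trans i j k hij hjk := by
    have hik : i ≠ k := by
      rintro rfl
      exact majority_asymm hP1 hij hjk
    exact lt_of_le_of_ne (hST i j k hij.le hjk.le) (hstrict i k hik).symm
  trichotomous i j hij hji := by
    by_contra hne
    rcases (hstrict i j hne).lt_or_gt with h | h
    · exact hji ((pairwiseMarginal_lt_half_iff hP1 hne).mp h)
    · exact hij h

theorem copelandRank_eq (hP1 : ∑ σ, P σ = 1) (i : Fin n) :
    copelandRank P i = 1 + #{k | majority P k i} := by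
  rw [copelandRank]
  congr 2
  ext k
  simp only [mem_filter, mem_univ, true_and]
  constructor
  · rintro ⟨hki, hlt⟩
    exact (pairwiseMarginal_lt_half_iff hP1 hki.symm).mp hlt
  · intro hki
    have hne : k ≠ i := by
      rintro rfl
      exact majority_asymm hP1 hki hki
    exact ⟨hne, (pairwiseMarginal_lt_half_iff hP1 hne.symm).mpr hki⟩

theorem copelandRank_lt_copelandRank_iff (hP1 : ∑ σ, P σ = 1)
    [IsStrictTotalOrder (Fin n) (majority P)] {i j : Fin n} :
    copelandRank P i < copelandRank P j ↔ majority P i j := by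
  rw [copelandRank_eq hP1, copelandRank_eq hP1, add_lt_add_iff_left, card_filter_rel_lt_iff]

theorem exists_perm_val_add_one_eq_copelandRank (hP1 : ∑ σ, P σ = 1)
    [IsStrictTotalOrder (Fin n) (majority P)] :
    ∃ e : Equiv.Perm (Fin n), ∀ i, (e i : ℕ) + 1 = copelandRank P i := by
  obtain ⟨e, he⟩ := exists_equiv_fin_val_eq_card_filter_rel (majority P)
  refine ⟨e.trans (finCongr (Fintype.card_fin n)), fun i => ?_⟩
  rw [copelandRank_eq hP1, add_comm, ← he]
  rfl

theorem kemenyRisk_lt_of_ne (hstrict : ∀ i j : Fin n, i ≠ j → pairwiseMarginal P i j ≠ 1 / 2)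
    {e σ : Equiv.Perm (Fin n)} (he : ∀ i j, e i < e j ↔ majority P i j) (hσ : σ ≠ e) :
    kemenyRisk P e < kemenyRisk P σ := by
  have hterm (i j : Fin n) (hij : i ≠ j) (hne : ¬(σ i < σ j ↔ e i < e j)) :
      |pairwiseMarginal P i j - if e i < e j then 1 else 0| <
        |pairwiseMarginal P i j - if σ i < σ j then 1 else 0| :=
    abs_sub_ite_lt_of_not_iff (hstrict i j hij) (he i j) hne
  obtain ⟨i, j, hij, hne⟩ : ∃ i j, i < j ∧ ¬(σ i < σ j ↔ e i < e j) := by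
    by_contra! h
    exact hσ (Equiv.eq_of_lt_iff_lt h)
  refine sum_lt_sum (fun q hq => ?_) ⟨(i, j), by simpa using hij, hterm i j hij.ne hne⟩
  by_cases hq' : σ q.1 < σ q.2 ↔ e q.1 < e q.2
  · rw [if_congr hq' rfl rfl]
  · exact (hterm q.1 q.2 (by simpa using (mem_filter.mp hq).2.ne) hq').le

theorem pairwiseMarginal_sub_half_mul_copelandRank_sub_pos (hP1 : ∑ σ, P σ = 1)
    (hstrict : ∀ i j : Fin n, i ≠ j → pairwiseMarginal P i j ≠ 1 / 2)
    [IsStrictTotalOrder (Fin n) (majority P)] {i j : Fin n} (hij : i ≠ j) :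
    0 < (pairwiseMarginal P i j - 1 / 2) * ((copelandRank P j : ℝ) - copelandRank P i) := by
  rcases (hstrict i j hij).lt_or_gt with h | h
  · have hji : copelandRank P j < copelandRank P i :=
      (copelandRank_lt_copelandRank_iff hP1).mpr ((pairwiseMarginal_lt_half_iff hP1 hij).mp h)
    exact mul_pos_of_neg_of_neg (sub_neg.mpr h) (sub_neg.mpr (by exact_mod_cast hji))
  · have hij' : copelandRank P i < copelandRank P j :=
      (copelandRank_lt_copelandRank_iff hP1).mpr h
    exact mul_pos (sub_pos.mpr h) (sub_pos.mpr (by exact_mod_cast hij'))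

end Copeland

theorem copeland_unique_kemeny_median_general {n : ℕ} (P : Equiv.Perm (Fin n) → ℝ)
    (hP1 : ∑ σ : Equiv.Perm (Fin n), P σ = 1)
    (hST : ∀ i j k : Fin n, 1 / 2 ≤ pairwiseMarginal P i j →
      1 / 2 ≤ pairwiseMarginal P j k → 1 / 2 ≤ pairwiseMarginal P i k)
    (hstrict : ∀ i j : Fin n, i ≠ j → pairwiseMarginal P i j ≠ 1 / 2) :
    (∃! σ₀ : Equiv.Perm (Fin n), ∀ σ, kemenyRisk P σ₀ ≤ kemenyRisk P σ) ∧
    (∀ σ₀ : Equiv.Perm (Fin n), (∀ σ, kemenyRisk P σ₀ ≤ kemenyRisk P σ) →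
      (∀ i, (σ₀ i : ℕ) + 1 = copelandRank P i) ∧
      ∀ i j : Fin n, i < j →
        0 < (pairwiseMarginal P i j - 1 / 2) *
          ((copelandRank P j : ℝ) - (copelandRank P i : ℝ))) := by
  have := majority_isStrictTotalOrder hP1 hST hstrict
  obtain ⟨e, he⟩ := exists_perm_val_add_one_eq_copelandRank hP1
  have he_lt (i j : Fin n) : e i < e j ↔ majority P i j := by
    rw [Fin.lt_def, ← add_lt_add_iff_right 1, he, he, copelandRank_lt_copelandRank_iff hP1]
  have hmin (σ : Equiv.Perm (Fin n)) (hσ : σ ≠ e) : kemenyRisk P e < kemenyRisk P σ :=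
    kemenyRisk_lt_of_ne hstrict he_lt hσ
  have hunique (σ₀ : Equiv.Perm (Fin n)) (hσ₀ : ∀ σ, kemenyRisk P σ₀ ≤ kemenyRisk P σ) :
      σ₀ = e :=
    by_contra fun hne => (hσ₀ e).not_gt (hmin σ₀ hne)
  refine ⟨⟨e, fun σ => ?_, hunique⟩, fun σ₀ hσ₀ => ⟨hunique σ₀ hσ₀ ▸ he, fun i j hij => ?_⟩⟩
  · rcases eq_or_ne σ e with rfl | hσ
    exacts [le_rfl, (hmin σ hσ).le]
  · exact pairwiseMarginal_sub_half_mul_copelandRank_sub_pos hP1 hstrict hij.ne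

/-- For a strictly stochastically transitive `P`, the Copeland ranking `σ*_P`
is the unique minimizer of `L_P` over `S_n` and satisfies
`(p_{i,j} - 1/2)(σ*_P(j) - σ*_P(i)) > 0` for all `i < j` (ranks of a
permutation `σ` being `σ(i)+1 ∈ {1,…,n}`). -/
theorem copeland_unique_kemeny_median {n : ℕ} (P : Equiv.Perm (Fin n) → ℝ)
    (hP0 : ∀ σ, 0 ≤ P σ) (hP1 : ∑ σ : Equiv.Perm (Fin n), P σ = 1)
    (hST : ∀ i j k : Fin n, 1 / 2 ≤ pairwiseMarginal P i j →
      1 / 2 ≤ pairwiseMarginal P j k → 1 / 2 ≤ pairwiseMarginal P i k)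
    (hstrict : ∀ i j : Fin n, i ≠ j → pairwiseMarginal P i j ≠ 1 / 2) :
    (∃! σ₀ : Equiv.Perm (Fin n), ∀ σ, kemenyRisk P σ₀ ≤ kemenyRisk P σ) ∧
    (∀ σ₀ : Equiv.Perm (Fin n), (∀ σ, kemenyRisk P σ₀ ≤ kemenyRisk P σ) →
      (∀ i, (σ₀ i : ℕ) + 1 = copelandRank P i) ∧
      ∀ i j : Fin n, i < j →
        0 < (pairwiseMarginal P i j - 1 / 2) *
          ((copelandRank P j : ℝ) - (copelandRank P i : ℝ))) :=
  copeland_unique_kemeny_median_general P hP1 hST hstrict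
end

section
/- If P is a strongly/strictly stochastically transitive bucket distribution on S_n and K* = max{K : there exists a bucket order C of size K with P ∈ 𝐏_C}, then there is a unique shape λ* of size K* such that Λ_P(C*^{(K*,λ*)}) = 0, i.e., a unique bucket order of maximal size whose bucket distribution class contains P. -/
open Finset
open scoped Classical

/-- `P` belongs to `𝐏_C` for the bucket order encoded by `b`: every
inter-bucket pair is deterministically ordered, i.e. `p_{j,i} = 0` whenever
`i ≺_C j`.  (Equivalently, `Λ_P(C) = 0`.) -/
def MemBucketClass {n K : ℕ} (P : Equiv.Perm (Fin n) → ℝ)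
    (b : Fin n → Fin K) : Prop :=
  ∀ i j, b i < b j → pairwiseMarginal P j i = 0

/-!
Two bucket orders `b, b'` with `P ∈ 𝐏_b ∩ 𝐏_b'` have a common refinement `i ↦ (b i, b' i)`
(ordered lexicographically) with `P` in its class, so at the maximal size `K*` both induce the
same partition of `Fin n`. Since `p_{i,j} + p_{j,i} = 1`, the marginals cannot vanish in both
directions, so the order of the buckets is forced as well: the bucket order of size `K*`, and
hence its shape, is unique.
-/

open Function

theorem eq_of_surjective_of_lt_iff_lt {ι α : Type*} [LinearOrder α] [WellFoundedLT α]
    {b b' : ι → α} (hb : Surjective b) (hb' : Surjective b')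
    (h : ∀ i j, b i < b j ↔ b' i < b' j) : b = b' := by
  set f : α → α := b' ∘ surjInv hb
  have hfb : ∀ i, f (b i) = b' i := fun i => by
    have hi := surjInv_eq hb (b i)
    exact le_antisymm (not_lt.1 fun hlt => ((h _ _).2 hlt).ne hi.symm)
      (not_lt.1 fun hlt => ((h _ _).2 hlt).ne hi)
  have hmono : StrictMono f := fun k l hkl => by
    simpa only [f, comp_apply, ← h, surjInv_eq hb] using hkl
  have hrange : Set.range f = Set.range id := by
    rw [Set.range_id, Set.eq_univ_iff_forall]
    intro k
    obtain ⟨i, rfl⟩ := hb' k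
    exact ⟨b i, hfb i⟩
  have hf : f = id := (hmono.range_inj strictMono_id).1 hrange
  funext i
  rw [← hfb i, hf, id]

section BucketOrder

variable {n : ℕ} {P : Equiv.Perm (Fin n) → ℝ}

theorem pairwiseMarginal_add_pairwiseMarginal (hP1 : ∑ σ : Equiv.Perm (Fin n), P σ = 1)
    {i j : Fin n} (hij : i ≠ j) :
    pairwiseMarginal P i j + pairwiseMarginal P j i = 1 := by
  unfold pairwiseMarginal
  rw [← sum_add_distrib, ← hP1]
  refine sum_congr rfl fun σ _ => ?_
  rcases (σ.injective.ne hij).lt_or_gt with h | h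
  · rw [if_pos h, if_neg h.not_gt, add_zero]
  · rw [if_neg h.not_gt, if_pos h, zero_add]

variable (P) in
def admissibleBucketCounts : Set ℕ :=
  {K | ∃ b : Fin n → Fin K, Surjective b ∧ MemBucketClass P b}

theorem card_image_mem_admissibleBucketCounts {α : Type*} [LinearOrder α] (c : Fin n → α)
    (hc : ∀ i j, c i < c j → pairwiseMarginal P j i = 0) :
    #(univ.image c) ∈ admissibleBucketCounts P := by
  have hmem : ∀ i, c i ∈ univ.image c := fun i => mem_image_of_mem c (mem_univ i)
  let e := (univ.image c).orderIsoOfFin rfl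
  refine ⟨fun i => e.symm ⟨c i, hmem i⟩, fun t => ?_, fun i j h => hc i j ?_⟩
  · obtain ⟨i, -, hi⟩ := mem_image.1 (e t).2
    exact ⟨i, by simp only [hi, Subtype.coe_eta, OrderIso.symm_apply_apply]⟩
  · simpa only [OrderIso.lt_iff_lt, Subtype.mk_lt_mk] using h

theorem MemBucketClass.lex {K L : ℕ} {b : Fin n → Fin K} {b' : Fin n → Fin L}
    (hb : MemBucketClass P b) (hb' : MemBucketClass P b') (i j : Fin n)
    (h : toLex (b i, b' i) < toLex (b j, b' j)) : pairwiseMarginal P j i = 0 := by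
  rcases Prod.Lex.lt_iff.1 h with hlt | ⟨-, hlt⟩
  exacts [hb i j hlt, hb' i j hlt]

theorem MemBucketClass.eq_of_eq_of_isGreatest {K : ℕ}
    (hmax : IsGreatest (admissibleBucketCounts P) K) {b b' : Fin n → Fin K}
    (hb : Surjective b) (hbP : MemBucketClass P b) (hb'P : MemBucketClass P b')
    {i j : Fin n} (h : b i = b j) : b' i = b' j := by
  set c : Fin n → Fin K ×ₗ Fin K := fun i => toLex (b i, b' i)
  have hle : #(univ.image c) ≤ K :=
    hmax.2 (card_image_mem_admissibleBucketCounts c (hbP.lex hb'P))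
  have hfst : (univ.image c).image (fun x => (ofLex x).1) = univ := by
    rw [image_image]
    exact image_univ_of_surjective hb
  have hge : K ≤ #(univ.image c) := by
    simpa only [hfst, card_univ, Fintype.card_fin] using
      card_image_le (s := univ.image c) (f := fun x : Fin K ×ₗ Fin K => (ofLex x).1)
  have hinj : Set.InjOn (fun x : Fin K ×ₗ Fin K => (ofLex x).1) ↑(univ.image c) := by
    rw [← card_image_iff, hfst, card_univ, Fintype.card_fin]
    exact le_antisymm hge hle
  exact congrArg (fun x => (ofLex x).2)
    (hinj (mem_image_of_mem c (mem_univ i)) (mem_image_of_mem c (mem_univ j)) h)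

theorem MemBucketClass.lt_of_ne (hP1 : ∑ σ : Equiv.Perm (Fin n), P σ = 1) {K : ℕ}
    {b : Fin n → Fin K} (hbP : MemBucketClass P b) {i j : Fin n} (hne : b i ≠ b j)
    (hji : pairwiseMarginal P j i = 0) : b i < b j := by
  refine hne.lt_or_gt.resolve_right fun hgt => ?_
  have hsum := pairwiseMarginal_add_pairwiseMarginal hP1 (ne_of_apply_ne b hne)
  rw [hbP j i hgt, hji] at hsum
  norm_num at hsum

theorem MemBucketClass.lt_of_lt_of_isGreatest (hP1 : ∑ σ : Equiv.Perm (Fin n), P σ = 1)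
    {K : ℕ} (hmax : IsGreatest (admissibleBucketCounts P) K) {b b' : Fin n → Fin K}
    (hbP : MemBucketClass P b) (hb' : Surjective b') (hb'P : MemBucketClass P b')
    {i j : Fin n} (h : b i < b j) : b' i < b' j :=
  hb'P.lt_of_ne hP1 (fun heq => h.ne (hb'P.eq_of_eq_of_isGreatest hmax hb' hbP heq))
    (hbP i j h)

theorem MemBucketClass.eq_of_isGreatest (hP1 : ∑ σ : Equiv.Perm (Fin n), P σ = 1)
    {K : ℕ} (hmax : IsGreatest (admissibleBucketCounts P) K) {b b' : Fin n → Fin K}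
    (hb : Surjective b) (hbP : MemBucketClass P b)
    (hb' : Surjective b') (hb'P : MemBucketClass P b') : b = b' :=
  eq_of_surjective_of_lt_iff_lt hb hb' fun _ _ =>
    ⟨hbP.lt_of_lt_of_isGreatest hP1 hmax hb' hb'P, hb'P.lt_of_lt_of_isGreatest hP1 hmax hb hbP⟩

end BucketOrder

theorem unique_maximal_shape_general {n : ℕ} (P : Equiv.Perm (Fin n) → ℝ)
    (hP1 : ∑ σ : Equiv.Perm (Fin n), P σ = 1)
    (Kstar : ℕ)
    (hmax : IsGreatest {K : ℕ | ∃ b : Fin n → Fin K,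
      Function.Surjective b ∧ MemBucketClass P b} Kstar) :
    ∃! lam : Fin Kstar → ℕ, ∃ b : Fin n → Fin Kstar,
      Function.Surjective b ∧
      (∀ k, (Finset.univ.filter (fun i => b i = k)).card = lam k) ∧
      MemBucketClass P b := by
  obtain ⟨b, hb, hbP⟩ := hmax.1
  refine ⟨fun k => #(univ.filter fun i => b i = k), ⟨b, hb, fun _ => rfl, hbP⟩, ?_⟩
  rintro lam ⟨b', hb', hlam, hb'P⟩
  funext k
  rw [← hlam k, hb'P.eq_of_isGreatest hP1 hmax hb' hb hbP]

/-- If `P` is a strongly/strictly stochastically transitive bucket distribution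
and `K*` is the maximal number of buckets of a bucket order `C` with
`P ∈ 𝐏_C`, then there is a unique shape `λ*` of size `K*` carried by a bucket
order of size `K*` whose bucket-distribution class contains `P` (i.e. with
zero distortion). -/
theorem unique_maximal_shape {n : ℕ} (P : Equiv.Perm (Fin n) → ℝ)
    (hP0 : ∀ σ, 0 ≤ P σ) (hP1 : ∑ σ : Equiv.Perm (Fin n), P σ = 1)
    (hSST : ∀ i j k : Fin n, i ≠ j → k ≠ i → k ≠ j →
      1 / 2 ≤ pairwiseMarginal P i j →
      pairwiseMarginal P j k ≤ pairwiseMarginal P i k)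
    (hstrict : ∀ i j : Fin n, i ≠ j → pairwiseMarginal P i j ≠ 1 / 2)
    (Kstar : ℕ) (hK2 : 2 ≤ Kstar)
    (hmax : IsGreatest {K : ℕ | ∃ b : Fin n → Fin K,
      Function.Surjective b ∧ MemBucketClass P b} Kstar) :
    ∃! lam : Fin Kstar → ℕ, ∃ b : Fin n → Fin Kstar,
      Function.Surjective b ∧
      (∀ k, (Finset.univ.filter (fun i => b i = k)).card = lam k) ∧
      MemBucketClass P b :=
  unique_maximal_shape_general P hP1 Kstar hmax
end
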